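/- arXiv:2405.16726 — 4 statements merged into one kernel-verified Lean document; each statement's English description precedes it below -/
import Mathlib

section
/- For any edge probabilities p : Pairs(V) → [0,1] with Σ_{e ∈ Pairs(V)} p(e) > 0, every EPGM f w.r.t. p has the same overlap, namely Ov(f) = (Σ_{e ∈ Pairs(V)} p(e)²) / (Σ_{e ∈ Pairs(V)} p(e)); in particular, every EPGM w.r.t. p has exactly the same overlap (hence the same output variability) as the corresponding edge independent graph model with edge probabilities p. -/
open Finset

/-- For any edge probabilities `p : Pairs(V) → [0,1]` with `Σ_e p(e) > 0`, every EPGM `f`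
w.r.t. `p` has the same overlap, namely
`Ov(f) = (Σ_e p(e)²) / (Σ_e p(e))`, where the overlap of an RGM `f` is
`Ov(f) = E|E(G′) ∩ E(G″)| / E|E(G)|` with `G, G′, G″` independent samples from `f`.
In particular, every EPGM w.r.t. `p` has exactly the same overlap as the corresponding
edge independent graph model with edge probabilities `p`. -/
theorem epgm_constant_overlap
    {V : Type*} [Fintype V] [DecidableEq V]
    (p : Sym2 V → ℝ)
    (hp0 : ∀ e : Sym2 V, ¬ e.IsDiag → 0 ≤ p e)
    (hp1 : ∀ e : Sym2 V, ¬ e.IsDiag → p e ≤ 1)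
    (hppos : 0 < ∑ e : {e : Sym2 V // ¬ e.IsDiag}, p e.1)
    (f : Finset {e : Sym2 V // ¬ e.IsDiag} → ℝ)
    (hf0 : ∀ G, 0 ≤ f G)
    (hf1 : ∑ G : Finset {e : Sym2 V // ¬ e.IsDiag}, f G = 1)
    (hEP : ∀ e : {e : Sym2 V // ¬ e.IsDiag},
      ∑ G ∈ univ.filter (fun G => e ∈ G), f G = p e.1) :
    (∑ G' : Finset {e : Sym2 V // ¬ e.IsDiag},
      ∑ G'' : Finset {e : Sym2 V // ¬ e.IsDiag},
        f G' * f G'' * ((G' ∩ G'').card : ℝ))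
    / (∑ G : Finset {e : Sym2 V // ¬ e.IsDiag}, f G * (G.card : ℝ))
      = (∑ e : {e : Sym2 V // ¬ e.IsDiag}, (p e.1) ^ 2)
        / (∑ e : {e : Sym2 V // ¬ e.IsDiag}, p e.1) := by
  have hcard : ∀ S : Finset {e : Sym2 V // ¬ e.IsDiag},
      ((S.card : ℝ)) = ∑ e : {e : Sym2 V // ¬ e.IsDiag}, if e ∈ S then (1:ℝ) else 0 := by
    intro S
    rw [Finset.sum_boole]
    congr 1
    simp [Finset.filter_mem_eq_inter]
  have hmarg : ∀ e : {e : Sym2 V // ¬ e.IsDiag},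
      (∑ G : Finset {e : Sym2 V // ¬ e.IsDiag}, if e ∈ G then f G else 0) = p e.1 := by
    intro e
    rw [← hEP e, Finset.sum_filter]
  have hden : (∑ G : Finset {e : Sym2 V // ¬ e.IsDiag}, f G * (G.card : ℝ))
      = ∑ e : {e : Sym2 V // ¬ e.IsDiag}, p e.1 := by
    simp_rw [hcard, Finset.mul_sum, mul_ite, mul_one, mul_zero]
    rw [Finset.sum_comm]
    exact Finset.sum_congr rfl fun e _ => hmarg e
  have key : ∀ G' G'' : Finset {e : Sym2 V // ¬ e.IsDiag},
      f G' * f G'' * ((G' ∩ G'').card : ℝ)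
      = ∑ e : {e : Sym2 V // ¬ e.IsDiag},
          (if e ∈ G' then f G' else 0) * (if e ∈ G'' then f G'' else 0) := by
    intro G' G''
    rw [hcard, Finset.mul_sum]
    refine Finset.sum_congr rfl fun e _ => ?_
    by_cases h1 : e ∈ G' <;> by_cases h2 : e ∈ G'' <;>
      simp [h1, h2, Finset.mem_inter]
  have hnum : (∑ G' : Finset {e : Sym2 V // ¬ e.IsDiag},
      ∑ G'' : Finset {e : Sym2 V // ¬ e.IsDiag}, f G' * f G'' * ((G' ∩ G'').card : ℝ))
      = ∑ e : {e : Sym2 V // ¬ e.IsDiag}, (p e.1) ^ 2 := by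
    simp_rw [key]
    rw [Finset.sum_comm]
    refine Eq.trans (Finset.sum_congr rfl fun G'' _ => Finset.sum_comm) ?_
    rw [Finset.sum_comm]
    refine Finset.sum_congr rfl fun e _ => ?_
    simp_rw [← Finset.sum_mul]
    rw [← Finset.mul_sum, hmarg e, sq]
  rw [hnum, hden]
end

section
/- Binding produces subgraph densities at least as high as the corresponding EIGM: for any edge probabilities p : Pairs(V) → [0,1], any partition 𝓟 of Pairs(V), and any set E* ⊆ Pairs(V) of pairs, the probability that all pairs of E* are edges of the graph generated by general binding w.r.t. p and 𝓟 is at least ∏_{e ∈ E*} p(e), which is the probability that all pairs of E* are edges under the edge independent graph model with edge probabilities p. -/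
open Finset MeasureTheory

/-- Binding produces subgraph densities at least as high as the corresponding EIGM: for any
edge probabilities `p : Pairs(V) → [0,1]`, any partition `𝓟` of `Pairs(V)` (with `part e`
the part of `𝓟` containing `e`), and any set `E* ⊆ Pairs(V)` of pairs, the probability that
all pairs of `E*` are edges of the graph generated by general binding w.r.t. `p` and `𝓟`
is at least `∏_{e ∈ E*} p(e)`, the probability that all pairs of `E*` are edges under the
edge independent graph model with edge probabilities `p`. -/
theorem general_binding_subgraph_prob_ge_eigm
    {V : Type*} [Fintype V] [DecidableEq V]
    (p : Sym2 V → ℝ)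
    (hp0 : ∀ e : Sym2 V, ¬ e.IsDiag → 0 ≤ p e)
    (hp1 : ∀ e : Sym2 V, ¬ e.IsDiag → p e ≤ 1)
    (𝓟 : Finset (Finset {e : Sym2 V // ¬ e.IsDiag}))
    (hne : ∀ Q ∈ 𝓟, Q.Nonempty)
    (part : {e : Sym2 V // ¬ e.IsDiag} → Finset {e : Sym2 V // ¬ e.IsDiag})
    (hpart : ∀ e, part e ∈ 𝓟)
    (hmem : ∀ e, e ∈ part e)
    (huniq : ∀ Q ∈ 𝓟, ∀ e ∈ Q, part e = Q)
    (Estar : Finset {e : Sym2 V // ¬ e.IsDiag}) :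
    ENNReal.ofReal (∏ e ∈ Estar, p e.1)
      ≤ Measure.pi (fun _ : Finset {e : Sym2 V // ¬ e.IsDiag} =>
          volume.restrict (Set.Icc (0 : ℝ) 1))
        {σ | ∀ e ∈ Estar, σ (part e) ≤ p e.1} := by
  classical
  set m : (Finset {e : Sym2 V // ¬ e.IsDiag}) → ℝ := fun Q => ∏ e ∈ Estar.filter (fun e => part e = Q), p e.1 with hm
  have hp0' : ∀ e : {e : Sym2 V // ¬ e.IsDiag}, 0 ≤ p e.1 := fun e => hp0 e.1 e.2
  have hp1' : ∀ e : {e : Sym2 V // ¬ e.IsDiag}, p e.1 ≤ 1 := fun e => hp1 e.1 e.2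
  have hm0 : ∀ Q, 0 ≤ m Q := fun Q => Finset.prod_nonneg (fun e _ => hp0' e)
  have hm1 : ∀ Q, m Q ≤ 1 := fun Q =>
    Finset.prod_le_one (fun e _ => hp0' e) (fun e _ => hp1' e)
  -- fiberwise product
  have hfib : ∏ Q : (Finset {e : Sym2 V // ¬ e.IsDiag}), m Q = ∏ e ∈ Estar, p e.1 := by
    exact Finset.prod_fiberwise_of_maps_to (fun e _ => Finset.mem_univ (part e)) _
  -- the small product set
  have hsubset : (Set.univ.pi fun Q : (Finset {e : Sym2 V // ¬ e.IsDiag}) => Set.Iic (m Q)) ⊆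
      {σ : (Finset {e : Sym2 V // ¬ e.IsDiag}) → ℝ | ∀ e ∈ Estar, σ (part e) ≤ p e.1} := by
    intro σ hσ e he
    have h1 : σ (part e) ≤ m (part e) := hσ (part e) (Set.mem_univ _)
    refine h1.trans ?_
    have hefilter : e ∈ Estar.filter (fun e' => part e' = part e) := by
      simp [he]
    calc m (part e) = p e.1 * ∏ e' ∈ (Estar.filter (fun e' => part e' = part e)).erase e,
          p e'.1 := (Finset.mul_prod_erase _ _ hefilter).symm
      _ ≤ p e.1 * 1 := by
          refine mul_le_mul_of_nonneg_left ?_ (hp0' e)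
          exact Finset.prod_le_one (fun e' _ => hp0' e') (fun e' _ => hp1' e')
      _ = p e.1 := mul_one _
  -- measure of each coordinate set
  have hcoord : ∀ Q : (Finset {e : Sym2 V // ¬ e.IsDiag}), (volume.restrict (Set.Icc (0:ℝ) 1)) (Set.Iic (m Q))
      = ENNReal.ofReal (m Q) := by
    intro Q
    rw [Measure.restrict_apply measurableSet_Iic]
    have : Set.Iic (m Q) ∩ Set.Icc (0:ℝ) 1 = Set.Icc 0 (m Q) := by
      ext x
      constructor
      · rintro ⟨hx1, hx2, _⟩; exact ⟨hx2, hx1⟩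
      · rintro ⟨hx1, hx2⟩; exact ⟨hx2, hx1, hx2.trans (hm1 Q)⟩
    rw [this, Real.volume_Icc, sub_zero]
  calc ENNReal.ofReal (∏ e ∈ Estar, p e.1)
      = ENNReal.ofReal (∏ Q : (Finset {e : Sym2 V // ¬ e.IsDiag}), m Q) := by rw [hfib]
    _ = ∏ Q : (Finset {e : Sym2 V // ¬ e.IsDiag}), ENNReal.ofReal (m Q) :=
        ENNReal.ofReal_prod_of_nonneg (fun Q _ => hm0 Q)
    _ = Measure.pi (fun _ : (Finset {e : Sym2 V // ¬ e.IsDiag}) => volume.restrict (Set.Icc (0:ℝ) 1))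
          (Set.univ.pi fun Q : (Finset {e : Sym2 V // ¬ e.IsDiag}) => Set.Iic (m Q)) := by
        rw [Measure.pi_pi]
        exact Finset.prod_congr rfl (fun Q _ => (hcoord Q).symm)
    _ ≤ _ := measure_mono hsubset
end

section
/- Binding produces at least as many triangles in expectation as the corresponding EIGM: for any edge probabilities p : Pairs(V) → [0,1] and any partition 𝓟 of Pairs(V), the expected number of triangles (triples of distinct nodes u, v, w whose three pairs are all edges) of the graph generated by general binding w.r.t. p and 𝓟 is at least Σ_{{u,v,w} ∈ (V choose 3)} p({u,v}) · p({v,w}) · p({u,w}), the expected number of triangles under the edge independent graph model with edge probabilities p. -/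
open Finset MeasureTheory
open scoped ENNReal

/-- Binding produces at least as many triangles in expectation as the corresponding EIGM: for
any edge probabilities `p : Pairs(V) → [0,1]` and any partition `𝓟` of `Pairs(V)` (with
`part e` the part of `𝓟` containing `e`), the expected number of triangles (triples `T` of
three distinct nodes all of whose three pairs are edges) of the graph generated by general
binding w.r.t. `p` and `𝓟` is at least
`Σ_{{u,v,w} ∈ (V choose 3)} p({u,v})·p({v,w})·p({u,w})`, the expected number of triangles
under the edge independent graph model with edge probabilities `p`. Here a pair `e` lies
within a vertex triple `T` iff `e.1 ∈ T.sym2`. -/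
theorem general_binding_expected_triangles_ge_eigm
    {V : Type*} [Fintype V] [DecidableEq V]
    (p : Sym2 V → ℝ)
    (hp0 : ∀ e : Sym2 V, ¬ e.IsDiag → 0 ≤ p e)
    (hp1 : ∀ e : Sym2 V, ¬ e.IsDiag → p e ≤ 1)
    (𝓟 : Finset (Finset {e : Sym2 V // ¬ e.IsDiag}))
    (hne : ∀ Q ∈ 𝓟, Q.Nonempty)
    (part : {e : Sym2 V // ¬ e.IsDiag} → Finset {e : Sym2 V // ¬ e.IsDiag})
    (hpart : ∀ e, part e ∈ 𝓟)
    (hmem : ∀ e, e ∈ part e)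
    (huniq : ∀ Q ∈ 𝓟, ∀ e ∈ Q, part e = Q) :
    ∑ T ∈ (univ : Finset V).powersetCard 3,
        ∏ e ∈ univ.filter (fun e : {e : Sym2 V // ¬ e.IsDiag} => e.1 ∈ T.sym2),
          ENNReal.ofReal (p e.1)
      ≤ ∫⁻ σ,
          ((((univ : Finset V).powersetCard 3).filter
            (fun T => ∀ e : {e : Sym2 V // ¬ e.IsDiag},
              e.1 ∈ T.sym2 → σ (part e) ≤ p e.1)).card : ℝ≥0∞)
          ∂ (Measure.pi (fun _ : Finset {e : Sym2 V // ¬ e.IsDiag} =>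
              volume.restrict (Set.Icc (0 : ℝ) 1))) := by
  classical
  -- the event that all edges of T are present
  set A : Finset V → Set (Finset {e : Sym2 V // ¬ e.IsDiag} → ℝ) := fun T =>
    {σ | ∀ e : {e : Sym2 V // ¬ e.IsDiag}, e.1 ∈ T.sym2 → σ (part e) ≤ p e.1} with hA
  -- per-coordinate sets
  set S : Finset V → Finset {e : Sym2 V // ¬ e.IsDiag} → Set ℝ := fun T Q =>
    ⋂ e ∈ (univ.filter (fun e : {e : Sym2 V // ¬ e.IsDiag} =>
      e.1 ∈ T.sym2 ∧ part e = Q)), Set.Iic (p e.1) with hS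
  have hSmeas : ∀ T Q, MeasurableSet (S T Q) := by
    intro T Q
    exact MeasurableSet.biInter (Finset.countable_toSet _) (fun e _ => measurableSet_Iic)
  have hAeq : ∀ T, A T = Set.univ.pi (S T) := by
    intro T
    ext σ
    simp only [hA, hS, Set.mem_setOf_eq, Set.mem_univ_pi, Set.mem_iInter, Finset.mem_filter,
      Finset.mem_univ, true_and, Set.mem_Iic]
    constructor
    · rintro h Q e ⟨he, hpe⟩
      exact hpe ▸ h e he
    · intro h e he
      exact h (part e) e ⟨he, rfl⟩
  have hAmeas : ∀ T, MeasurableSet (A T) := by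
    intro T
    rw [hAeq]
    exact MeasurableSet.univ_pi (fun Q => hSmeas T Q)
  -- rewrite the integrand as a sum of indicators
  have hint : ∀ σ : Finset {e : Sym2 V // ¬ e.IsDiag} → ℝ,
      ((((univ : Finset V).powersetCard 3).filter
        (fun T => ∀ e : {e : Sym2 V // ¬ e.IsDiag},
          e.1 ∈ T.sym2 → σ (part e) ≤ p e.1)).card : ℝ≥0∞)
      = ∑ T ∈ (univ : Finset V).powersetCard 3, (A T).indicator 1 σ := by
    intro σ
    rw [Finset.card_filter, Nat.cast_sum]
    refine Finset.sum_congr rfl (fun T _ => ?_)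
    by_cases h : ∀ e : {e : Sym2 V // ¬ e.IsDiag}, e.1 ∈ T.sym2 → σ (part e) ≤ p e.1
    · rw [if_pos h, Set.indicator_of_mem (show σ ∈ A T from h)]
      simp
    · rw [if_neg h, Set.indicator_of_notMem (show σ ∉ A T from h)]
      simp
  have hlin : (∫⁻ σ, ((((univ : Finset V).powersetCard 3).filter
        (fun T => ∀ e : {e : Sym2 V // ¬ e.IsDiag},
          e.1 ∈ T.sym2 → σ (part e) ≤ p e.1)).card : ℝ≥0∞)
        ∂ (Measure.pi (fun _ : Finset {e : Sym2 V // ¬ e.IsDiag} =>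
            volume.restrict (Set.Icc (0 : ℝ) 1))))
      = ∑ T ∈ (univ : Finset V).powersetCard 3,
          (Measure.pi (fun _ : Finset {e : Sym2 V // ¬ e.IsDiag} =>
            volume.restrict (Set.Icc (0 : ℝ) 1))) (A T) := by
    simp_rw [hint]
    rw [lintegral_finset_sum _ (fun T _ =>
      (measurable_one.indicator (hAmeas T)))]
    exact Finset.sum_congr rfl (fun T _ => lintegral_indicator_one (hAmeas T))
  rw [hlin]
  refine Finset.sum_le_sum (fun T _ => ?_)
  -- compute the measure of A T via the product formula
  rw [hAeq, Measure.pi_pi]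
  -- group the LHS product over parts
  rw [← Finset.prod_fiberwise_of_maps_to
    (t := (univ : Finset (Finset {e : Sym2 V // ¬ e.IsDiag})))
    (g := part) (fun e _ => Finset.mem_univ _)
    (fun e => ENNReal.ofReal (p e.1))]
  refine Finset.prod_le_prod' (fun Q _ => ?_)
  -- per part: product of p's ≤ measure of S T Q
  set F : Finset {e : Sym2 V // ¬ e.IsDiag} :=
    (univ.filter (fun e : {e : Sym2 V // ¬ e.IsDiag} => e.1 ∈ T.sym2)).filter
      (fun e => part e = Q) with hF
  have hF' : F = univ.filter (fun e : {e : Sym2 V // ¬ e.IsDiag} =>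
      e.1 ∈ T.sym2 ∧ part e = Q) := by
    simp [hF, Finset.filter_filter]
  have hrange : ∀ e ∈ F, 0 ≤ p e.1 ∧ p e.1 ≤ 1 := by
    intro e _
    exact ⟨hp0 e.1 e.2, hp1 e.1 e.2⟩
  set c : ℝ := ∏ e ∈ F, p e.1 with hc
  have hc0 : 0 ≤ c := Finset.prod_nonneg (fun e he => (hrange e he).1)
  have hc1 : c ≤ 1 := Finset.prod_le_one (fun e he => (hrange e he).1)
    (fun e he => (hrange e he).2)
  have hcle : ∀ e ∈ F, c ≤ p e.1 := by
    intro e he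
    rw [hc, ← Finset.mul_prod_erase F _ he]
    calc p e.1 * ∏ x ∈ F.erase e, p x.1
        ≤ p e.1 * 1 := by
          refine mul_le_mul_of_nonneg_left ?_ (hrange e he).1
          exact Finset.prod_le_one (fun x hx => (hrange x (Finset.mem_of_mem_erase hx)).1)
            (fun x hx => (hrange x (Finset.mem_of_mem_erase hx)).2)
      _ = p e.1 := mul_one _
  have hsub : Set.Icc (0 : ℝ) c ⊆ S T Q := by
    intro x hx
    simp only [hS, Set.mem_iInter, Set.mem_Iic]
    intro e he
    rw [← hF'] at he
    exact hx.2.trans (hcle e he)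
  calc ∏ e ∈ F, ENNReal.ofReal (p e.1)
      = ENNReal.ofReal c := (ENNReal.ofReal_prod_of_nonneg
        (fun e he => (hrange e he).1)).symm
    _ = volume.restrict (Set.Icc (0 : ℝ) 1) (Set.Icc (0 : ℝ) c) := by
        rw [Measure.restrict_apply measurableSet_Icc, Set.Icc_inter_Icc]
        simp [min_eq_left hc1, Real.volume_Icc]
    _ ≤ volume.restrict (Set.Icc (0 : ℝ) 1) (S T Q) := measure_mono hsub
end

section
/- Correctness of the parallel binding edge-probability decomposition: let p ∈ [0,1], let q ∈ (0,1), and let R ≥ 1 be an integer. Define r = min((1 − (1 − p)^{1/R}) / q, 1) and p_rem = max(1 − (1 − p)/(1 − q)^R, 0). Then (1 − q·r)^R · (1 − p_rem) = 1 − p. Consequently, if an edge is independently inserted in each of R rounds with probability q·r, and additionally inserted with probability p_rem, then the overall probability that the edge is present equals p. -/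
/-!
Write `x = (1 - p)^{1/R}`, so `x^R = 1 - p`. The per-round survival probability is
`1 - q r = max x (1 - q)` and the remainder survival probability is
`1 - p_rem = min (x^R / (1 - q)^R) 1`. Since `t ↦ t^R` is monotone on `[0, ∞)`, the product is
`max a b * min (a / b) 1` with `a = x^R`, `b = (1 - q)^R`, and this is `a = 1 - p`
whichever of `a`, `b` is larger.
-/

lemma one_sub_mul_min_div_one {a q : ℝ} (hq : 0 < q) :
    1 - q * min (a / q) 1 = max (1 - a) (1 - q) := by
  rw [mul_min_of_nonneg _ _ hq.le, mul_div_cancel₀ a hq.ne', mul_one, max_sub_sub_left]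

lemma one_sub_max_one_sub_zero (y : ℝ) : 1 - max (1 - y) 0 = min y 1 := by
  rw [← min_sub_sub_left, sub_sub_cancel, sub_zero]

lemma max_mul_min_div_one {a b : ℝ} (hb : 0 < b) : max a b * min (a / b) 1 = a := by
  rcases le_total a b with hab | hba
  · rw [max_eq_right hab, min_eq_left ((div_le_one hb).mpr hab), mul_div_cancel₀ a hb.ne']
  · rw [max_eq_left hba, min_eq_right ((one_le_div hb).mpr hba), mul_one]

theorem parallel_binding_decomposition_general
    (p q : ℝ) (R : ℕ)
    (hp1 : p ≤ 1)
    (hq0 : 0 < q) (hq1 : q < 1)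
    (hR : 1 ≤ R) :
    (1 - q * min ((1 - (1 - p) ^ ((1 : ℝ) / R)) / q) 1) ^ R
      * (1 - max (1 - (1 - p) / (1 - q) ^ R) 0) = 1 - p := by
  have hp : 0 ≤ 1 - p := sub_nonneg.mpr hp1
  have hc : 0 < 1 - q := sub_pos.mpr hq1
  have hroot : ((1 - p) ^ ((1 : ℝ) / R)) ^ R = 1 - p := by
    rw [one_div]
    exact Real.rpow_inv_natCast_pow hp (by omega)
  rw [one_sub_mul_min_div_one hq0, sub_sub_cancel, one_sub_max_one_sub_zero,
    pow_left_monotoneOn.map_max (Real.rpow_nonneg hp _) hc.le, hroot]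
  exact max_mul_min_div_one (pow_pos hc R)

/-- Correctness of the parallel binding edge-probability decomposition: let `p ∈ [0,1]`, let
`q ∈ (0,1)`, and let `R ≥ 1` be an integer. Define
`r = min((1 − (1 − p)^{1/R}) / q, 1)` (where `(1 − p)^{1/R}` is the real `R`-th root, i.e.,
a real power with exponent `1/R`) and `p_rem = max(1 − (1 − p)/(1 − q)^R, 0)`. Then
`(1 − q·r)^R · (1 − p_rem) = 1 − p`; consequently, if an edge is independently inserted in
each of `R` rounds with probability `q·r` and additionally inserted with probability
`p_rem`, the overall probability that the edge is present equals `p`. -/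
theorem parallel_binding_decomposition
    (p q : ℝ) (R : ℕ)
    (hp0 : 0 ≤ p) (hp1 : p ≤ 1)
    (hq0 : 0 < q) (hq1 : q < 1)
    (hR : 1 ≤ R) :
    (1 - q * min ((1 - (1 - p) ^ ((1 : ℝ) / R)) / q) 1) ^ R
      * (1 - max (1 - (1 - p) / (1 - q) ^ R) 0) = 1 - p :=
  parallel_binding_decomposition_general p q R hp1 hq0 hq1 hR
end
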